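/- arXiv:1403.7610 — 2 statements merged into one kernel-verified Lean document; each statement's English description precedes it below -/
import Mathlib

section
/- The class K₀ has the amalgamation property: for all A, B₁, B₂ ∈ K₀ and embeddings f₁ : A → B₁ and f₂ : A → B₂, there exist C ∈ K₀ and embeddings g₁ : B₁ → C and g₂ : B₂ → C with g₁ ∘ f₁ = g₂ ∘ f₂. -/
/-!
The amalgam is the pushout `B₁ ⊔_A B₂` of sets. An `n`-set of the pushout lying in both `B₁` and
`B₂` lies in `A`, where both embeddings induce the same `E_n`-classes; hence the `E_n`-classes of
`B₁` and of `B₂` can themselves be glued along those of `A`, again as a pushout. Declaring two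
injective tuples `E_n`-related when they have the same label in this pushout of classes (tuples
inside neither `B₁` nor `B₂` being labelled by their set of entries) gives an equivalence relation
for free, and injectivity of the pushout inclusions makes `B₁` and `B₂` substructures. Finally the
amalgam is copied onto `Fin m`, lifted to whatever universe the amalgam `C` is asked to live in.
-/

open FirstOrder Language Structure CategoryTheory

/-- The language `L₀` with a `2n`-ary relation symbol `E_n` for each `n ≥ 1`. -/
def L₀ : FirstOrder.Language where
  Functions := fun _ => Empty
  Relations := fun k => {n : ℕ // 0 < n ∧ k = n + n}

/-- The relation symbol `E_n`. -/
def Esymb (n : ℕ) (hn : 0 < n) : L₀.Relations (n + n) := ⟨n, hn, rfl⟩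

/-- `E_n(x̄, ȳ)` in an `L₀`-structure. -/
def ERel (M : Type*) [L₀.Structure M] (n : ℕ) (hn : 0 < n) (x y : Fin n → M) : Prop :=
  Structure.RelMap (Esymb n hn) (Fin.append x y)

/-- The defining conditions for membership in `K₀`: each `E_n` holds only on pairs of
injective `n`-tuples, is invariant under permuting the entries of each tuple separately,
and induces an equivalence relation on `n`-element subsets. -/
def IsK0Struct (C : Type*) [L₀.Structure C] : Prop :=
  ∀ (n : ℕ) (hn : 0 < n),
    (∀ x y : Fin n → C, ERel C n hn x y → Function.Injective x ∧ Function.Injective y) ∧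
    (∀ (x y : Fin n → C) (σ τ : Equiv.Perm (Fin n)),
        ERel C n hn x y → ERel C n hn (x ∘ σ) (y ∘ τ)) ∧
    (∀ x : Fin n → C, Function.Injective x → ERel C n hn x x) ∧
    (∀ x y : Fin n → C, ERel C n hn x y → ERel C n hn y x) ∧
    (∀ x y z : Fin n → C, ERel C n hn x y → ERel C n hn y z → ERel C n hn x z)

/-- The class `K₀` of finite `L₀`-structures as above. -/
def K₀ : Set (Bundled L₀.Structure) := {C | Finite C ∧ IsK0Struct C}

theorem Fin.comp_append {α β : Type*} (f : α → β) {m n : ℕ} (x : Fin m → α) (y : Fin n → α) :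
    f ∘ Fin.append x y = Fin.append (f ∘ x) (f ∘ y) := by
  funext i
  refine Fin.addCases (fun j => ?_) (fun j => ?_) i <;> simp

theorem exists_comp_eq_comp_perm_iff {α β : Type*} (g : α → β) {n : ℕ} (x : Fin n → β)
    (σ : Equiv.Perm (Fin n)) : (∃ u, g ∘ u = x ∘ σ) ↔ ∃ u, g ∘ u = x := by
  refine ⟨fun ⟨u, hu⟩ => ⟨u ∘ σ.symm, ?_⟩, fun ⟨u, hu⟩ => ⟨u ∘ σ, by rw [← hu]; rfl⟩⟩
  rw [← Function.comp_assoc, hu, Function.comp_assoc, σ.self_comp_symm, Function.comp_id]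

/-- `E_n` is reflexive only on injective tuples; adding the diagonal makes it an equivalence on
all tuples. -/
def SameOrERel (M : Type*) [L₀.Structure M] (n : ℕ) (hn : 0 < n) (x y : Fin n → M) : Prop :=
  x = y ∨ ERel M n hn x y

section Structures

variable {M N : Type*} [L₀.Structure M] [L₀.Structure N]

theorem eRel_comp_embedding_iff (f : M ↪[L₀] N) {n : ℕ} (hn : 0 < n) (x y : Fin n → M) :
    ERel N n hn (f ∘ x) (f ∘ y) ↔ ERel M n hn x y := by
  rw [ERel, ERel, ← Fin.comp_append]
  exact f.map_rel _ _

def embeddingOfERel (f : M → N) (hf : Function.Injective f)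
    (hE : ∀ n (hn : 0 < n) (x y : Fin n → M), ERel N n hn (f ∘ x) (f ∘ y) ↔ ERel M n hn x y) :
    M ↪[L₀] N where
  toFun := f
  inj' := hf
  map_fun' := fun F => Empty.elim F
  map_rel' := by
    rintro _ ⟨n, hn, rfl⟩ x
    rw [← Fin.append_castAdd_natAdd (f := x), Fin.comp_append]
    exact hE n hn _ _

theorem IsK0Struct.comap (hN : IsK0Struct N) (f : M ↪[L₀] N) : IsK0Struct M := by
  intro n hn
  obtain ⟨hinj, hperm, hrefl, hsymm, htrans⟩ := hN n hn
  have hf := eRel_comp_embedding_iff f hn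
  refine ⟨fun x y h => ?_, fun x y σ τ h => ?_, fun x hx => ?_, fun x y h => ?_,
    fun x y z h h' => ?_⟩
  · exact ⟨(hinj _ _ ((hf x y).2 h)).1.of_comp, (hinj _ _ ((hf x y).2 h)).2.of_comp⟩
  · exact (hf _ _).1 (hperm _ _ σ τ ((hf x y).2 h))
  · exact (hf x x).1 (hrefl _ (f.injective.comp hx))
  · exact (hf y x).1 (hsymm _ _ ((hf x y).2 h))
  · exact (hf x z).1 (htrans _ _ _ ((hf x y).2 h) ((hf y z).2 h'))

theorem IsK0Struct.equivalence_sameOrERel (hM : IsK0Struct M) (n : ℕ) (hn : 0 < n) :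
    Equivalence (SameOrERel M n hn) where
  refl _ := Or.inl rfl
  symm := by
    rintro x y (rfl | hxy)
    exacts [Or.inl rfl, Or.inr ((hM n hn).2.2.2.1 x y hxy)]
  trans := by
    rintro x y z (rfl | hxy) (rfl | hyz)
    exacts [Or.inl rfl, Or.inr hyz, Or.inr hxy, Or.inr ((hM n hn).2.2.2.2 x y z hxy hyz)]

theorem IsK0Struct.eRel_iff (hM : IsK0Struct M) {n : ℕ} (hn : 0 < n) (x y : Fin n → M) :
    ERel M n hn x y ↔ Function.Injective x ∧ Function.Injective y ∧
      Quot.mk (SameOrERel M n hn) x = Quot.mk _ y := by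
  rw [(hM.equivalence_sameOrERel n hn).quot_mk_eq_iff]
  constructor
  · intro hxy
    exact ⟨((hM n hn).1 x y hxy).1, ((hM n hn).1 x y hxy).2, Or.inr hxy⟩
  · rintro ⟨hx, -, rfl | hxy⟩
    exacts [(hM n hn).2.2.1 x hx, hxy]

theorem IsK0Struct.quot_mk_comp_perm (hM : IsK0Struct M) {n : ℕ} (hn : 0 < n)
    {x : Fin n → M} (hx : Function.Injective x) (σ : Equiv.Perm (Fin n)) :
    Quot.mk (SameOrERel M n hn) (x ∘ σ) = Quot.mk _ x :=
  Quot.sound (Or.inr ((hM n hn).2.1 x x σ 1 ((hM n hn).2.2.1 x hx)))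

def eRelClassMap (f : M ↪[L₀] N) (n : ℕ) (hn : 0 < n) :
    Quot (SameOrERel M n hn) → Quot (SameOrERel N n hn) :=
  Quot.map (f ∘ ·) fun x y hxy =>
    hxy.imp (congrArg _) (eRel_comp_embedding_iff f hn x y).2

theorem eRelClassMap_injective (hN : IsK0Struct N) (f : M ↪[L₀] N) (n : ℕ) (hn : 0 < n) :
    Function.Injective (eRelClassMap f n hn) := by
  rintro ⟨x⟩ ⟨y⟩ hxy
  apply Quot.sound
  obtain hxy | hxy := ((hN.equivalence_sameOrERel n hn).quot_mk_eq_iff _ _).1 hxy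
  exacts [Or.inl (f.injective.comp_left hxy), Or.inr ((eRel_comp_embedding_iff f hn x y).1 hxy)]

end Structures

universe v

theorem exists_mem_K₀_equiv {M : Type*} [L₀.Structure M] [Finite M] (hM : IsK0Struct M) :
    ∃ C : Bundled.{v} L₀.Structure, C ∈ K₀ ∧ Nonempty (M ≃[L₀] C) := by
  obtain ⟨m, ⟨e⟩⟩ := Finite.exists_equiv_fin M
  let e' : M ≃ ULift.{v} (Fin m) := e.trans Equiv.ulift.symm
  let := e'.inducedStructure (L := L₀)
  exact ⟨Bundled.of (ULift (Fin m)),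
    ⟨inferInstanceAs (Finite (ULift (Fin m))),
      hM.comap (e'.inducedStructureEquiv (L := L₀)).symm.toEmbedding⟩,
    ⟨e'.inducedStructureEquiv⟩⟩

section Labels

variable {M : Type*} {β : ∀ n, 0 < n → Type*} (κ : ∀ n (hn : 0 < n), (Fin n → M) → β n hn)

abbrev structureOfLabel : L₀.Structure M where
  funMap F := Empty.elim F
  RelMap r x :=
    let y := x ∘ Fin.cast r.2.2.symm
    Function.Injective (fun i => y (Fin.castAdd r.1 i)) ∧
      Function.Injective (fun i => y (Fin.natAdd r.1 i)) ∧
      κ r.1 r.2.1 (fun i => y (Fin.castAdd r.1 i)) = κ r.1 r.2.1 (fun i => y (Fin.natAdd r.1 i))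

theorem eRel_structureOfLabel_iff {n : ℕ} (hn : 0 < n) (x y : Fin n → M) :
    @ERel M (structureOfLabel κ) n hn x y ↔
      Function.Injective x ∧ Function.Injective y ∧ κ n hn x = κ n hn y := by
  change Function.Injective (fun i => Fin.append x y (Fin.castAdd n i)) ∧
    Function.Injective (fun i => Fin.append x y (Fin.natAdd n i)) ∧
    κ n hn (fun i => Fin.append x y (Fin.castAdd n i)) =
      κ n hn (fun i => Fin.append x y (Fin.natAdd n i)) ↔ _
  simp only [Fin.append_left, Fin.append_right]

theorem isK0Struct_structureOfLabel
    (hκ : ∀ n hn (x : Fin n → M) (σ : Equiv.Perm (Fin n)),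
      Function.Injective x → κ n hn (x ∘ σ) = κ n hn x) :
    @IsK0Struct M (structureOfLabel κ) := by
  intro n hn
  simp only [eRel_structureOfLabel_iff]
  refine ⟨fun x y h => ⟨h.1, h.2.1⟩, ?_, fun x hx => ⟨hx, hx, trivial⟩,
    fun x y h => ⟨h.2.1, h.1, h.2.2.symm⟩,
    fun x y z h h' => ⟨h.1, h'.2.1, h.2.2.trans h'.2.2⟩⟩
  rintro x y σ τ ⟨hx, hy, hxy⟩
  refine ⟨hx.comp σ.injective, hy.comp τ.injective, ?_⟩
  rw [hκ n hn x σ hx, hκ n hn y τ hy, hxy]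

end Labels

section Glue

variable {S X Y : Type*} (f : S → X) (g : S → Y)

/-- The pushout of `f` and `g` in the category of types. -/
def Glue : Type _ :=
  Quot fun p q : X ⊕ Y => ∃ s, p = Sum.inl (f s) ∧ q = Sum.inr (g s)

namespace Glue

instance [Finite X] [Finite Y] : Finite (Glue f g) :=
  Quot.finite _

def inl (x : X) : Glue f g := Quot.mk _ (Sum.inl x)

def inr (y : Y) : Glue f g := Quot.mk _ (Sum.inr y)

theorem inl_apply (s : S) : inl f g (f s) = inr f g (g s) :=
  Quot.sound ⟨s, rfl, rfl⟩

variable {f g}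

open Classical in
/-- Moves the points of `Y` in the image of `g` to `X`; this detects equality in the pushout. -/
noncomputable def normalForm (hg : Function.Injective g) : Glue f g → X ⊕ {y // y ∉ Set.range g} :=
  Quot.lift (Sum.elim Sum.inl fun y =>
      if h : ∃ s, g s = y then Sum.inl (f h.choose) else Sum.inr ⟨y, mt Set.mem_range.1 h⟩) <| by
    rintro _ _ ⟨s, rfl, rfl⟩
    have h : ∃ s', g s' = g s := ⟨s, rfl⟩
    rw [Sum.elim_inl, Sum.elim_inr, dif_pos h, hg h.choose_spec]

theorem inl_injective (hg : Function.Injective g) : Function.Injective (inl f g) :=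
  fun _ _ h => Sum.inl_injective (congrArg (normalForm hg) h)

theorem inr_injective (hf : Function.Injective f) (hg : Function.Injective g) :
    Function.Injective (inr f g) := by
  intro y₁ y₂ h
  have h := congrArg (normalForm hg) h
  simp only [normalForm, inr, Sum.elim_inr] at h
  split_ifs at h with h₁ h₂ h₂
  · rw [← h₁.choose_spec, ← h₂.choose_spec, hf (Sum.inl_injective h)]
  · exact congrArg Subtype.val (Sum.inr_injective h)

theorem inl_eq_inr_iff (hg : Function.Injective g) (x : X) (y : Y) :
    inl f g x = inr f g y ↔ ∃ s, f s = x ∧ g s = y := by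
  refine ⟨fun h => ?_, fun ⟨s, hx, hy⟩ => hx ▸ hy ▸ inl_apply f g s⟩
  have h := congrArg (normalForm hg) h
  simp only [normalForm, inl, inr, Sum.elim_inl, Sum.elim_inr] at h
  split_ifs at h with hy
  exact ⟨hy.choose, (Sum.inl_injective h).symm, hy.choose_spec⟩

theorem inl_comp_eq_inr_comp_iff (hg : Function.Injective g) {ι : Type*} (u : ι → X)
    (v : ι → Y) : inl f g ∘ u = inr f g ∘ v ↔ ∃ s : ι → S, f ∘ s = u ∧ g ∘ s = v := by
  simp only [funext_iff, Function.comp_apply, inl_eq_inr_iff hg]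
  constructor
  · intro h
    choose s hs using h
    exact ⟨s, fun i => (hs i).1, fun i => (hs i).2⟩
  · rintro ⟨s, hu, hv⟩ i
    exact ⟨s i, hu i, hv i⟩

end Glue

end Glue

section Amalgam

variable {A B₁ B₂ : Type*} [L₀.Structure A] [L₀.Structure B₁] [L₀.Structure B₂]
  (f₁ : A ↪[L₀] B₁) (f₂ : A ↪[L₀] B₂)

abbrev Amalgam : Type _ := Glue f₁ f₂

namespace Amalgam

/-- Tuples inside neither `B₁` nor `B₂` are labelled by their set of entries. -/
abbrev Label (n : ℕ) (hn : 0 < n) : Type _ :=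
  Glue (eRelClassMap f₁ n hn) (eRelClassMap f₂ n hn) ⊕ Set (Amalgam f₁ f₂)

open Classical in
noncomputable def label (n : ℕ) (hn : 0 < n) (x : Fin n → Amalgam f₁ f₂) : Label f₁ f₂ n hn :=
  if h : ∃ u, Glue.inl f₁ f₂ ∘ u = x then Sum.inl (Glue.inl _ _ (Quot.mk _ h.choose))
  else if h : ∃ v, Glue.inr f₁ f₂ ∘ v = x then Sum.inl (Glue.inr _ _ (Quot.mk _ h.choose))
  else Sum.inr (Set.range x)

theorem label_inl_comp {n : ℕ} (hn : 0 < n) (u : Fin n → B₁) :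
    label f₁ f₂ n hn (Glue.inl f₁ f₂ ∘ u) = Sum.inl (Glue.inl _ _ (Quot.mk _ u)) := by
  have h : ∃ u', Glue.inl f₁ f₂ ∘ u' = Glue.inl f₁ f₂ ∘ u := ⟨u, rfl⟩
  rw [label, dif_pos h, (Glue.inl_injective f₂.injective).comp_left h.choose_spec]

theorem label_inr_comp {n : ℕ} (hn : 0 < n) (v : Fin n → B₂) :
    label f₁ f₂ n hn (Glue.inr f₁ f₂ ∘ v) = Sum.inl (Glue.inr _ _ (Quot.mk _ v)) := by
  by_cases h : ∃ u, Glue.inl f₁ f₂ ∘ u = Glue.inr f₁ f₂ ∘ v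
  · rw [label, dif_pos h]
    obtain ⟨a, ha, rfl⟩ := (Glue.inl_comp_eq_inr_comp_iff f₂.injective _ v).1 h.choose_spec
    rw [← ha]
    exact congrArg Sum.inl (Glue.inl_apply _ _ (Quot.mk _ a))
  · have h' : ∃ v', Glue.inr f₁ f₂ ∘ v' = Glue.inr f₁ f₂ ∘ v := ⟨v, rfl⟩
    rw [label, dif_neg h, dif_pos h',
      (Glue.inr_injective f₁.injective f₂.injective).comp_left h'.choose_spec]

variable {f₁ f₂}

theorem label_comp_perm (hB₁ : IsK0Struct B₁) (hB₂ : IsK0Struct B₂) {n : ℕ} (hn : 0 < n)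
    {x : Fin n → Amalgam f₁ f₂} (hx : Function.Injective x) (σ : Equiv.Perm (Fin n)) :
    label f₁ f₂ n hn (x ∘ σ) = label f₁ f₂ n hn x := by
  by_cases h₁ : ∃ u, Glue.inl f₁ f₂ ∘ u = x
  · obtain ⟨u, rfl⟩ := h₁
    rw [Function.comp_assoc, label_inl_comp, label_inl_comp,
      hB₁.quot_mk_comp_perm hn (Function.Injective.of_comp hx)]
  by_cases h₂ : ∃ v, Glue.inr f₁ f₂ ∘ v = x
  · obtain ⟨v, rfl⟩ := h₂
    rw [Function.comp_assoc, label_inr_comp, label_inr_comp,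
      hB₂.quot_mk_comp_perm hn (Function.Injective.of_comp hx)]
  rw [label, label, dif_neg h₁, dif_neg h₂, dif_neg (by rwa [exists_comp_eq_comp_perm_iff]),
    dif_neg (by rwa [exists_comp_eq_comp_perm_iff]), (EquivLike.surjective σ).range_comp]

variable (f₁ f₂)

noncomputable instance : L₀.Structure (Amalgam f₁ f₂) :=
  structureOfLabel (label f₁ f₂)

variable {f₁ f₂}

theorem isK0Struct (hB₁ : IsK0Struct B₁) (hB₂ : IsK0Struct B₂) : IsK0Struct (Amalgam f₁ f₂) :=
  isK0Struct_structureOfLabel _ fun _ hn _ σ hx => label_comp_perm hB₁ hB₂ hn hx σ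

noncomputable def inlEmbedding (hB₁ : IsK0Struct B₁) (hB₂ : IsK0Struct B₂) :
    B₁ ↪[L₀] Amalgam f₁ f₂ :=
  embeddingOfERel (Glue.inl f₁ f₂) (Glue.inl_injective f₂.injective) fun n hn u v => by
    rw [eRel_structureOfLabel_iff, label_inl_comp, label_inl_comp, hB₁.eRel_iff,
      (Glue.inl_injective f₂.injective).of_comp_iff, (Glue.inl_injective f₂.injective).of_comp_iff,
      Sum.inl.inj_iff, (Glue.inl_injective (eRelClassMap_injective hB₂ f₂ n hn)).eq_iff]

noncomputable def inrEmbedding (hB₁ : IsK0Struct B₁) (hB₂ : IsK0Struct B₂) :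
    B₂ ↪[L₀] Amalgam f₁ f₂ :=
  embeddingOfERel (Glue.inr f₁ f₂) (Glue.inr_injective f₁.injective f₂.injective)
    fun n hn u v => by
    rw [eRel_structureOfLabel_iff, label_inr_comp, label_inr_comp, hB₂.eRel_iff,
      (Glue.inr_injective f₁.injective f₂.injective).of_comp_iff,
      (Glue.inr_injective f₁.injective f₂.injective).of_comp_iff, Sum.inl.inj_iff,
      (Glue.inr_injective (eRelClassMap_injective hB₁ f₁ n hn)
        (eRelClassMap_injective hB₂ f₂ n hn)).eq_iff]

end Amalgam

end Amalgam

/-- `K₀` has the amalgamation property. -/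
theorem K0_amalgamation :
    ∀ (A B₁ B₂ : Bundled L₀.Structure) (f₁ : A ↪[L₀] B₁) (f₂ : A ↪[L₀] B₂),
      A ∈ K₀ → B₁ ∈ K₀ → B₂ ∈ K₀ →
        ∃ (C : Bundled L₀.Structure) (g₁ : B₁ ↪[L₀] C) (g₂ : B₂ ↪[L₀] C),
          C ∈ K₀ ∧ g₁.comp f₁ = g₂.comp f₂ := by
  rintro A B₁ B₂ f₁ f₂ - ⟨hB₁fin, hB₁⟩ ⟨hB₂fin, hB₂⟩
  obtain ⟨C, hC, ⟨e⟩⟩ := exists_mem_K₀_equiv (Amalgam.isK0Struct (f₁ := f₁) (f₂ := f₂) hB₁ hB₂)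
  refine ⟨C, e.toEmbedding.comp (Amalgam.inlEmbedding hB₁ hB₂),
    e.toEmbedding.comp (Amalgam.inrEmbedding hB₁ hB₂), hC, ?_⟩
  ext a
  exact congrArg e (Glue.inl_apply f₁ f₂ a)
end

section
/- The class K₀ has the joint embedding property: for all B₁, B₂ ∈ K₀ there exist C ∈ K₀ and embeddings g₁ : B₁ → C and g₂ : B₂ → C. -/
open FirstOrder Language Structure CategoryTheory

section JEP

variable (A B : Type*) [L₀.Structure A] [L₀.Structure B]

/-- The relation used to interpret `E_n` on a disjoint union. -/
def JQ (n : ℕ) (hn : 0 < n) (x y : Fin n → A ⊕ B) : Prop :=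
  Function.Injective x ∧ Function.Injective y ∧
    ((∃ σ : Equiv.Perm (Fin n), y = x ∘ σ) ∨
     (∃ x' y' : Fin n → A, x = Sum.inl ∘ x' ∧ y = Sum.inl ∘ y' ∧ ERel A n hn x' y') ∨
     (∃ x' y' : Fin n → B, x = Sum.inr ∘ x' ∧ y = Sum.inr ∘ y' ∧ ERel B n hn x' y'))

/-- The `L₀`-structure on a disjoint union. -/
@[local instance] def sumStructure : L₀.Structure (A ⊕ B) where
  funMap := fun f => f.elim
  RelMap := fun {k} r v =>
    JQ A B r.1 r.2.1 (fun i => v (Fin.cast r.2.2.symm (Fin.castAdd _ i)))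
      (fun i => v (Fin.cast r.2.2.symm (Fin.natAdd _ i)))

lemma sumStructure_ERel (n : ℕ) (hn : 0 < n) (x y : Fin n → A ⊕ B) :
    @ERel (A ⊕ B) (sumStructure A B) n hn x y ↔ JQ A B n hn x y := by
  show JQ A B n hn (fun i => Fin.append x y (Fin.cast rfl (Fin.castAdd n i)))
      (fun i => Fin.append x y (Fin.cast rfl (Fin.natAdd n i))) ↔ JQ A B n hn x y
  have h1 : (fun i => Fin.append x y (Fin.cast rfl (Fin.castAdd n i))) = x :=
    funext fun i => Fin.append_left x y i
  have h2 : (fun i => Fin.append x y (Fin.cast rfl (Fin.natAdd n i))) = y :=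
    funext fun i => Fin.append_right x y i
  rw [h1, h2]

lemma sumStructure_relMap {k : ℕ} (r : L₀.Relations k) (v : Fin k → A ⊕ B) :
    @Structure.RelMap L₀ (A ⊕ B) (sumStructure A B) k r v ↔
      JQ A B r.1 r.2.1 (fun i => v (Fin.cast r.2.2.symm (Fin.castAdd _ i)))
        (fun i => v (Fin.cast r.2.2.symm (Fin.natAdd _ i))) := Iff.rfl

lemma jq_of_eRel (hA : IsK0Struct A) {n : ℕ} {hn : 0 < n} {x y : Fin n → A}
    (h : ERel A n hn x y) : JQ A B n hn (Sum.inl ∘ x) (Sum.inl ∘ y) := by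
  obtain ⟨hx, hy⟩ := (hA n hn).1 x y h
  exact ⟨Sum.inl_injective.comp hx, Sum.inl_injective.comp hy,
    Or.inr (Or.inl ⟨x, y, rfl, rfl, h⟩)⟩

lemma eRel_of_jq (hA : IsK0Struct A) {n : ℕ} {hn : 0 < n} {x y : Fin n → A}
    (h : JQ A B n hn (Sum.inl ∘ x) (Sum.inl ∘ y)) : ERel A n hn x y := by
  obtain ⟨hx, hy, hc⟩ := h
  have hxi : Function.Injective x := fun a b hab => hx (by simp [Function.comp, hab])
  rcases hc with ⟨σ, hσ⟩ | ⟨x', y', hx', hy', hE⟩ | ⟨x', y', hx', _, _⟩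
  · have hyx : y = x ∘ σ := by
      funext i
      have := congrFun hσ i
      simpa using this
    rw [hyx]
    have := (hA n hn).2.1 x x 1 σ ((hA n hn).2.2.1 x hxi)
    simpa using this
  · have hxx : x = x' := by
      funext i; exact Sum.inl_injective (congrFun hx' i)
    have hyy : y = y' := by
      funext i; exact Sum.inl_injective (congrFun hy' i)
    rw [hxx, hyy]; exact hE
  · exact absurd (congrFun hx' ⟨0, hn⟩) (by simp)

lemma jq_of_eRel_right (hB : IsK0Struct B) {n : ℕ} {hn : 0 < n} {x y : Fin n → B}
    (h : ERel B n hn x y) : JQ A B n hn (Sum.inr ∘ x) (Sum.inr ∘ y) := by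
  obtain ⟨hx, hy⟩ := (hB n hn).1 x y h
  exact ⟨Sum.inr_injective.comp hx, Sum.inr_injective.comp hy,
    Or.inr (Or.inr ⟨x, y, rfl, rfl, h⟩)⟩

lemma eRel_of_jq_right (hB : IsK0Struct B) {n : ℕ} {hn : 0 < n} {x y : Fin n → B}
    (h : JQ A B n hn (Sum.inr ∘ x) (Sum.inr ∘ y)) : ERel B n hn x y := by
  obtain ⟨hx, hy, hc⟩ := h
  have hxi : Function.Injective x := fun a b hab => hx (by simp [Function.comp, hab])
  rcases hc with ⟨σ, hσ⟩ | ⟨x', y', hx', _, _⟩ | ⟨x', y', hx', hy', hE⟩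
  · have hyx : y = x ∘ σ := by
      funext i
      have := congrFun hσ i
      simpa using this
    rw [hyx]
    have := (hB n hn).2.1 x x 1 σ ((hB n hn).2.2.1 x hxi)
    simpa using this
  · exact absurd (congrFun hx' ⟨0, hn⟩) (by simp)
  · have hxx : x = x' := by
      funext i; exact Sum.inr_injective (congrFun hx' i)
    have hyy : y = y' := by
      funext i; exact Sum.inr_injective (congrFun hy' i)
    rw [hxx, hyy]; exact hE

lemma jq_perm (hA : IsK0Struct A) (hB : IsK0Struct B) {n : ℕ} {hn : 0 < n}
    {x y : Fin n → A ⊕ B} (σ τ : Equiv.Perm (Fin n)) (h : JQ A B n hn x y) :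
    JQ A B n hn (x ∘ σ) (y ∘ τ) := by
  obtain ⟨hx, hy, hc⟩ := h
  refine ⟨hx.comp σ.injective, hy.comp τ.injective, ?_⟩
  rcases hc with ⟨ρ, hρ⟩ | ⟨x', y', hx', hy', hE⟩ | ⟨x', y', hx', hy', hE⟩
  · exact Or.inl ⟨σ⁻¹ * ρ * τ, by subst hρ; funext i; simp [Function.comp]⟩
  · exact Or.inr (Or.inl ⟨x' ∘ σ, y' ∘ τ, by rw [hx']; rfl, by rw [hy']; rfl,
      (hA n hn).2.1 x' y' σ τ hE⟩)
  · exact Or.inr (Or.inr ⟨x' ∘ σ, y' ∘ τ, by rw [hx']; rfl, by rw [hy']; rfl,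
      (hB n hn).2.1 x' y' σ τ hE⟩)

lemma jq_symm (hA : IsK0Struct A) (hB : IsK0Struct B) {n : ℕ} {hn : 0 < n}
    {x y : Fin n → A ⊕ B} (h : JQ A B n hn x y) : JQ A B n hn y x := by
  obtain ⟨hx, hy, hc⟩ := h
  refine ⟨hy, hx, ?_⟩
  rcases hc with ⟨ρ, hρ⟩ | ⟨x', y', hx', hy', hE⟩ | ⟨x', y', hx', hy', hE⟩
  · exact Or.inl ⟨ρ⁻¹, by subst hρ; funext i; simp [Function.comp]⟩
  · exact Or.inr (Or.inl ⟨y', x', hy', hx', (hA n hn).2.2.2.1 x' y' hE⟩)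
  · exact Or.inr (Or.inr ⟨y', x', hy', hx', (hB n hn).2.2.2.1 x' y' hE⟩)

lemma jq_trans (hA : IsK0Struct A) (hB : IsK0Struct B) {n : ℕ} {hn : 0 < n}
    {x y z : Fin n → A ⊕ B} (h1 : JQ A B n hn x y) (h2 : JQ A B n hn y z) :
    JQ A B n hn x z := by
  obtain ⟨hx, hy, hc1⟩ := h1
  obtain ⟨-, hz, hc2⟩ := h2
  refine ⟨hx, hz, ?_⟩
  rcases hc1 with ⟨ρ, hρ⟩ | ⟨x', y', hx', hy', hE⟩ | ⟨x', y', hx', hy', hE⟩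
  · -- y = x ∘ ρ
    have hxy : x = y ∘ ⇑ρ⁻¹ := by rw [hρ]; funext i; simp
    rcases hc2 with ⟨τ, hτ⟩ | ⟨y2, z2, hy2, hz2, hE2⟩ | ⟨y2, z2, hy2, hz2, hE2⟩
    · refine Or.inl ⟨ρ * τ, ?_⟩
      rw [hτ, hρ]; funext i; simp
    · refine Or.inr (Or.inl ⟨y2 ∘ ⇑ρ⁻¹, z2, ?_, hz2, ?_⟩)
      · rw [hxy, hy2]; rfl
      · simpa using (hA n hn).2.1 y2 z2 ρ⁻¹ 1 hE2
    · refine Or.inr (Or.inr ⟨y2 ∘ ⇑ρ⁻¹, z2, ?_, hz2, ?_⟩)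
      · rw [hxy, hy2]; rfl
      · simpa using (hB n hn).2.1 y2 z2 ρ⁻¹ 1 hE2
  · -- left case for x,y
    rcases hc2 with ⟨τ, hτ⟩ | ⟨y2, z2, hy2, hz2, hE2⟩ | ⟨y2, z2, hy2, hz2, hE2⟩
    · refine Or.inr (Or.inl ⟨x', y' ∘ ⇑τ, hx', ?_, ?_⟩)
      · rw [hτ, hy']; rfl
      · simpa using (hA n hn).2.1 x' y' 1 τ hE
    · have hyy : y' = y2 := by
        funext i; exact Sum.inl_injective ((congrFun hy' i).symm.trans (congrFun hy2 i))
      exact Or.inr (Or.inl ⟨x', z2, hx', hz2, (hA n hn).2.2.2.2 x' y' z2 hE (hyy ▸ hE2)⟩)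
    · exact absurd ((congrFun hy' ⟨0, hn⟩).symm.trans (congrFun hy2 ⟨0, hn⟩)) (by simp)
  · -- right case for x,y
    rcases hc2 with ⟨τ, hτ⟩ | ⟨y2, z2, hy2, hz2, hE2⟩ | ⟨y2, z2, hy2, hz2, hE2⟩
    · refine Or.inr (Or.inr ⟨x', y' ∘ ⇑τ, hx', ?_, ?_⟩)
      · rw [hτ, hy']; rfl
      · simpa using (hB n hn).2.1 x' y' 1 τ hE
    · exact absurd ((congrFun hy' ⟨0, hn⟩).symm.trans (congrFun hy2 ⟨0, hn⟩)) (by simp)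
    · have hyy : y' = y2 := by
        funext i; exact Sum.inr_injective ((congrFun hy' i).symm.trans (congrFun hy2 i))
      exact Or.inr (Or.inr ⟨x', z2, hx', hz2, (hB n hn).2.2.2.2 x' y' z2 hE (hyy ▸ hE2)⟩)

lemma sumStructure_isK0 (hA : IsK0Struct A) (hB : IsK0Struct B) :
    @IsK0Struct (A ⊕ B) (sumStructure A B) := by
  intro n hn
  refine ⟨?_, ?_, ?_, ?_, ?_⟩
  · intro x y h
    obtain ⟨hx, hy, -⟩ := (sumStructure_ERel A B n hn x y).1 h
    exact ⟨hx, hy⟩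
  · intro x y σ τ h
    exact (sumStructure_ERel A B n hn _ _).2
      (jq_perm A B hA hB σ τ ((sumStructure_ERel A B n hn x y).1 h))
  · intro x hx
    exact (sumStructure_ERel A B n hn x x).2 ⟨hx, hx, Or.inl ⟨1, by funext i; simp⟩⟩
  · intro x y h
    exact (sumStructure_ERel A B n hn y x).2
      (jq_symm A B hA hB ((sumStructure_ERel A B n hn x y).1 h))
  · intro x y z h1 h2
    exact (sumStructure_ERel A B n hn x z).2
      (jq_trans A B hA hB ((sumStructure_ERel A B n hn x y).1 h1)
        ((sumStructure_ERel A B n hn y z).1 h2))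

lemma inl_map_rel (hA : IsK0Struct A) {k : ℕ} (r : L₀.Relations k) (v : Fin k → A) :
    @Structure.RelMap L₀ (A ⊕ B) (sumStructure A B) k r (Sum.inl ∘ v) ↔
      Structure.RelMap r v := by
  obtain ⟨n, hn, hk⟩ := r
  subst hk
  show JQ A B n hn (fun i => (Sum.inl ∘ v) (Fin.cast rfl (Fin.castAdd n i)))
      (fun i => (Sum.inl ∘ v) (Fin.cast rfl (Fin.natAdd n i))) ↔ RelMap (Esymb n hn) v
  have h1 : (fun i => (Sum.inl ∘ v) (Fin.cast rfl (Fin.castAdd n i)))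
      = (Sum.inl : A → A ⊕ B) ∘ fun i => v (Fin.castAdd n i) := funext fun i => rfl
  have h2 : (fun i => (Sum.inl ∘ v) (Fin.cast rfl (Fin.natAdd n i)))
      = (Sum.inl : A → A ⊕ B) ∘ fun i => v (Fin.natAdd n i) := funext fun i => rfl
  have key : JQ A B n hn (Sum.inl ∘ fun i => v (Fin.castAdd n i))
      (Sum.inl ∘ fun i => v (Fin.natAdd n i)) ↔
      ERel A n hn (fun i => v (Fin.castAdd n i)) (fun i => v (Fin.natAdd n i)) :=
    ⟨eRel_of_jq A B hA, jq_of_eRel A B hA⟩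
  rw [h1, h2, key]
  unfold ERel
  rw [Fin.append_castAdd_natAdd]

lemma inr_map_rel (hB : IsK0Struct B) {k : ℕ} (r : L₀.Relations k) (v : Fin k → B) :
    @Structure.RelMap L₀ (A ⊕ B) (sumStructure A B) k r (Sum.inr ∘ v) ↔
      Structure.RelMap r v := by
  obtain ⟨n, hn, hk⟩ := r
  subst hk
  show JQ A B n hn (fun i => (Sum.inr ∘ v) (Fin.cast rfl (Fin.castAdd n i)))
      (fun i => (Sum.inr ∘ v) (Fin.cast rfl (Fin.natAdd n i))) ↔ RelMap (Esymb n hn) v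
  have h1 : (fun i => (Sum.inr ∘ v) (Fin.cast rfl (Fin.castAdd n i)))
      = (Sum.inr : B → A ⊕ B) ∘ fun i => v (Fin.castAdd n i) := funext fun i => rfl
  have h2 : (fun i => (Sum.inr ∘ v) (Fin.cast rfl (Fin.natAdd n i)))
      = (Sum.inr : B → A ⊕ B) ∘ fun i => v (Fin.natAdd n i) := funext fun i => rfl
  have key : JQ A B n hn (Sum.inr ∘ fun i => v (Fin.castAdd n i))
      (Sum.inr ∘ fun i => v (Fin.natAdd n i)) ↔
      ERel B n hn (fun i => v (Fin.castAdd n i)) (fun i => v (Fin.natAdd n i)) :=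
    ⟨eRel_of_jq_right A B hB, jq_of_eRel_right A B hB⟩
  rw [h1, h2, key]
  unfold ERel
  rw [Fin.append_castAdd_natAdd]

/-- The embedding of the left summand. -/
def inlEmb (hA : IsK0Struct A) :
    A ↪[L₀] (A ⊕ B) where
  toFun := Sum.inl
  inj' := Sum.inl_injective
  map_fun' := fun {n} f _ => Empty.elim f
  map_rel' := fun {n} r x => inl_map_rel A B hA r x

/-- The embedding of the right summand. -/
def inrEmb (hB : IsK0Struct B) :
    @FirstOrder.Language.Embedding L₀ B (A ⊕ B) _ (sumStructure A B) where
  toFun := Sum.inr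
  inj' := Sum.inr_injective
  map_fun' := fun {n} f _ => Empty.elim f
  map_rel' := fun {n} r x => inr_map_rel A B hB r x

end JEP

lemma fin_comp_append {α β : Type*} (g : α → β) {m k : ℕ} (a : Fin m → α) (b : Fin k → α) :
    g ∘ Fin.append a b = Fin.append (g ∘ a) (g ∘ b) := by
  funext i
  refine Fin.addCases (fun j => ?_) (fun j => ?_) i
  · simp [Fin.append_left]
  · simp [Fin.append_right]

section Induced

variable {M : Type*} {N : Type*} [L₀.Structure M]

lemma induced_ERel (e : M ≃ N) (n : ℕ) (hn : 0 < n) (x y : Fin n → N) :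
    @ERel N (Equiv.inducedStructure e) n hn x y ↔ ERel M n hn (e.symm ∘ x) (e.symm ∘ y) := by
  show RelMap (Esymb n hn) (e.symm ∘ Fin.append x y) ↔ _
  rw [fin_comp_append]
  exact Iff.rfl

lemma isK0_induced (e : M ≃ N) (h : IsK0Struct M) :
    @IsK0Struct N (Equiv.inducedStructure e) := by
  intro n hn
  have inj_of : ∀ x : Fin n → N, Function.Injective (e.symm ∘ x) → Function.Injective x :=
    fun x hx a b hab => hx (congrArg e.symm hab)
  refine ⟨?_, ?_, ?_, ?_, ?_⟩
  · intro x y hxy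
    obtain ⟨h1, h2⟩ := (h n hn).1 _ _ ((induced_ERel e n hn x y).1 hxy)
    exact ⟨inj_of x h1, inj_of y h2⟩
  · intro x y σ τ hxy
    exact (induced_ERel e n hn _ _).2
      ((h n hn).2.1 _ _ σ τ ((induced_ERel e n hn x y).1 hxy))
  · intro x hx
    exact (induced_ERel e n hn x x).2 ((h n hn).2.2.1 _ (e.symm.injective.comp hx))
  · intro x y hxy
    exact (induced_ERel e n hn y x).2 ((h n hn).2.2.2.1 _ _ ((induced_ERel e n hn x y).1 hxy))
  · intro x y z h1 h2
    exact (induced_ERel e n hn x z).2 ((h n hn).2.2.2.2 _ _ _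
      ((induced_ERel e n hn x y).1 h1) ((induced_ERel e n hn y z).1 h2))

end Induced

/-- `K₀` has the joint embedding property. -/
theorem K0_jointEmbedding :
    ∀ B₁ B₂ : Bundled L₀.Structure, B₁ ∈ K₀ → B₂ ∈ K₀ →
      ∃ C : Bundled L₀.Structure, C ∈ K₀ ∧
        Nonempty (B₁ ↪[L₀] C) ∧ Nonempty (B₂ ↪[L₀] C) := by
  intro B₁ B₂ h₁ h₂
  obtain ⟨hfin₁, hK₁⟩ := h₁
  obtain ⟨hfin₂, hK₂⟩ := h₂
  haveI := hfin₁
  haveI := hfin₂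
  letI : L₀.Structure (↥B₁ ⊕ ↥B₂) := sumStructure ↥B₁ ↥B₂
  obtain ⟨k, ⟨e₀⟩⟩ := Finite.exists_equiv_fin (↥B₁ ⊕ ↥B₂)
  let e : (↥B₁ ⊕ ↥B₂) ≃ ULift (Fin k) := e₀.trans Equiv.ulift.symm
  letI : L₀.Structure (ULift (Fin k)) := Equiv.inducedStructure e
  refine ⟨⟨ULift (Fin k), inferInstance⟩, ⟨?_, ?_⟩, ⟨?_⟩, ⟨?_⟩⟩
  · exact Finite.of_equiv _ e
  · exact isK0_induced e (sumStructure_isK0 ↥B₁ ↥B₂ hK₁ hK₂)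
  · exact ((Equiv.inducedStructureEquiv e).toEmbedding).comp (inlEmb ↥B₁ ↥B₂ hK₁)
  · exact ((Equiv.inducedStructureEquiv e).toEmbedding).comp (inrEmb ↥B₁ ↥B₂ hK₂)
end
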